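/- arXiv:2301.07466 — 2 statements merged into one kernel-verified Lean document; each statement's English description precedes it below -/
import Mathlib

section
/- (Equation 1) Let n be a positive odd integer and let k = ν₂(n+1) be the 2-adic valuation of n+1 (so k ≥ 1). Then f^[k](n) = (n+1)·3^k/2^k − 1, where the division is exact, and this number is even. -/
/-!
Write `n + 1 = 2 ^ k * m` with `m` odd. For `j ≥ 1` the number `2 ^ j * a - 1` is odd and
`f` sends it to `2 ^ (j - 1) * (3 * a) - 1`, so `k` steps lead from `n` to `3 ^ k * m - 1`,
which is even because `3 ^ k * m` is odd.
-/

/-- The (shortcut) Collatz map. -/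
def collatz (n : ℕ) : ℕ := if n % 2 = 0 then n / 2 else (3 * n + 1) / 2

/-- The reduced Collatz (Syracuse) map: remove all factors of 2 from 3n+1. -/
def syracuse (n : ℕ) : ℕ := (3 * n + 1) / 2 ^ (padicValNat 2 (3 * n + 1))

lemma collatz_two_mul_sub_one {b : ℕ} (hb : 0 < b) : collatz (2 * b - 1) = 3 * b - 1 := by
  rw [collatz, if_neg (by omega)]
  omega

lemma collatz_iterate_two_pow_mul_sub_one (j : ℕ) {a : ℕ} (ha : 0 < a) :
    collatz^[j] (2 ^ j * a - 1) = 3 ^ j * a - 1 := by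
  induction j generalizing a with
  | zero => simp
  | succ j ih =>
    calc collatz^[j + 1] (2 ^ (j + 1) * a - 1)
        = collatz^[j] (collatz (2 * (2 ^ j * a) - 1)) := by
          rw [Function.iterate_succ_apply, pow_succ', mul_assoc]
      _ = collatz^[j] (2 ^ j * (3 * a) - 1) := by
          rw [collatz_two_mul_sub_one (by positivity), mul_left_comm]
      _ = 3 ^ (j + 1) * a - 1 := by rw [ih (by positivity), pow_succ, mul_assoc]

lemma padicValNat_two_pow_mul_of_odd (j : ℕ) {m : ℕ} (hm : Odd m) :
    padicValNat 2 (2 ^ j * m) = j := by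
  rw [padicValNat.mul (by positivity) hm.pos.ne', padicValNat.prime_pow,
    padicValNat.eq_zero_of_not_dvd hm.not_two_dvd_nat, add_zero]

theorem stmt5_general (n : ℕ) (hodd : Odd n)
    (k : ℕ) (hk : k = padicValNat 2 (n + 1)) :
    1 ≤ k ∧ 2 ^ k ∣ (n + 1) * 3 ^ k ∧
    collatz^[k] n = (n + 1) * 3 ^ k / 2 ^ k - 1 ∧
    Even ((n + 1) * 3 ^ k / 2 ^ k - 1) := by
  obtain ⟨j, m, hm, hnm⟩ := Nat.exists_eq_two_pow_mul_odd (Nat.add_one_ne_zero n)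
  obtain rfl : k = j := by rw [hk, hnm, padicValNat_two_pow_mul_of_odd j hm]
  have hk_pos : 1 ≤ k := Nat.one_le_iff_ne_zero.mpr <| by
    rintro rfl
    rw [pow_zero, one_mul] at hnm
    exact Nat.not_even_iff_odd.mpr (hnm ▸ hm) hodd.add_one
  have hquot : (n + 1) * 3 ^ k / 2 ^ k = 3 ^ k * m := by
    rw [hnm, mul_assoc, Nat.mul_div_cancel_left _ (by positivity), mul_comm]
  refine ⟨hk_pos, ⟨3 ^ k * m, by rw [hnm]; ring⟩, ?_, ?_⟩
  · rw [hquot, show n = 2 ^ k * m - 1 by omega, collatz_iterate_two_pow_mul_sub_one k hm.pos]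
  · rw [hquot]
    exact Nat.Odd.sub_odd ((Odd.pow (by decide)).mul hm) odd_one

theorem stmt5 (n : ℕ) (hn : 0 < n) (hodd : Odd n)
    (k : ℕ) (hk : k = padicValNat 2 (n + 1)) :
    1 ≤ k ∧ 2 ^ k ∣ (n + 1) * 3 ^ k ∧
    collatz^[k] n = (n + 1) * 3 ^ k / 2 ^ k - 1 ∧
    Even ((n + 1) * 3 ^ k / 2 ^ k - 1) :=
  stmt5_general n hodd k hk
end

section
/- (Theorem S, Restriction 3) Suppose n > 0 does not reach 1 under the Collatz map f, while every positive integer m with m < n reaches 1. Then n is not congruent to 1 modulo 4, i.e. n % 4 ≠ 1. -/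
theorem collatz_of_even {n : ℕ} (h : n % 2 = 0) : collatz n = n / 2 := if_pos h

theorem collatz_of_odd {n : ℕ} (h : n % 2 = 1) : collatz n = (3 * n + 1) / 2 :=
  if_neg (by omega)

theorem collatz_iterate_two_four_mul_add_one (k : ℕ) : collatz^[2] (4 * k + 1) = 3 * k + 1 := by
  have h₁ : collatz (4 * k + 1) = 6 * k + 2 := by rw [collatz_of_odd (by omega)]; omega
  have h₂ : collatz (6 * k + 2) = 3 * k + 1 := by rw [collatz_of_even (by omega)]; omega
  rw [Function.iterate_succ_apply, Function.iterate_one, h₁, h₂]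

theorem Function.exists_iterate_eq_of_exists_iterate_iterate_eq {α : Type*} (f : α → α)
    {a b : α} (i : ℕ) (h : ∃ j, f^[j] (f^[i] a) = b) : ∃ j, f^[j] a = b := by
  obtain ⟨j, hj⟩ := h
  exact ⟨j + i, by rwa [Function.iterate_add_apply]⟩

theorem stmt10_general (n : ℕ)
    (hdiv : ¬ ∃ j : ℕ, collatz^[j] n = 1)
    (hmin : ∀ m : ℕ, 0 < m → m < n → ∃ j : ℕ, collatz^[j] m = 1) :
    n % 4 ≠ 1 := by
  intro h
  obtain ⟨k, rfl⟩ : ∃ k, n = 4 * k + 1 := ⟨n / 4, by omega⟩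
  rcases Nat.eq_zero_or_pos k with rfl | hk
  · exact hdiv ⟨0, rfl⟩
  apply hdiv
  apply Function.exists_iterate_eq_of_exists_iterate_iterate_eq collatz 2
  rw [collatz_iterate_two_four_mul_add_one]
  exact hmin (3 * k + 1) (by omega) (by omega)

theorem stmt10 (n : ℕ) (hn : 0 < n)
    (hdiv : ¬ ∃ j : ℕ, collatz^[j] n = 1)
    (hmin : ∀ m : ℕ, 0 < m → m < n → ∃ j : ℕ, collatz^[j] m = 1) :
    n % 4 ≠ 1 :=
  stmt10_general n hdiv hmin
end
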